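/- A Q-category E is total if and only if E is injective in Q-CAT with respect to fully faithful Q-functors: for all Q-functors F : C → E and fully faithful G : C → D there exists a Q-functor H : D → E with HG ≅ F. -/

import Mathlib

/-! Common framework: quantaloids and quantaloid-enriched categories. -/

universe u v w w₂

structure Quantaloid (Obj : Type u) : Type (max u (v + 1)) where
  Hom : Obj → Obj → Type v
  [lat : ∀ S T : Obj, CompleteLattice (Hom S T)]
  comp : ∀ {S T U : Obj}, Hom T U → Hom S T → Hom S U
  one : ∀ S : Obj, Hom S S
  comp_assoc : ∀ {S T U V : Obj} (x : Hom U V) (y : Hom T U) (z : Hom S T),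
    comp (comp x y) z = comp x (comp y z)
  one_comp : ∀ {S T : Obj} (u : Hom S T), comp (one T) u = u
  comp_one : ∀ {S T : Obj} (u : Hom S T), comp u (one S) = u
  comp_sSup : ∀ {S T U : Obj} (v : Hom T U) (s : Set (Hom S T)),
    comp v (sSup s) = ⨆ u ∈ s, comp v u
  sSup_comp : ∀ {S T U : Obj} (s : Set (Hom T U)) (u : Hom S T),
    comp (sSup s) u = ⨆ v ∈ s, comp v u

attribute [instance] Quantaloid.lat

namespace Quantaloid

variable {Obj : Type u} (Q : Quantaloid Obj)

/-- Right extension `w ↙ u`. -/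
def rext {S T U : Obj} (w : Q.Hom S U) (u : Q.Hom S T) : Q.Hom T U :=
  sSup {v : Q.Hom T U | Q.comp v u ≤ w}

/-- Right lifting `v ↘ w`. -/
def rlift {S T U : Obj} (v : Q.Hom T U) (w : Q.Hom S U) : Q.Hom S T :=
  sSup {u : Q.Hom S T | Q.comp v u ≤ w}

/-- Transport of a hom-arrow along equalities of objects. -/
def cast2 {S S' T T' : Obj} (hS : S = S') (hT : T = T') (u : Q.Hom S T) : Q.Hom S' T' := by
  subst hS; subst hT; exact u

variable {Q}

theorem comp_le_comp_left {S T U : Obj} {v v' : Q.Hom T U} (h : v ≤ v') (u : Q.Hom S T) :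
    Q.comp v u ≤ Q.comp v' u := by
  have h2 : (sSup {v, v'} : Q.Hom T U) = v' := by rw [sSup_pair, sup_eq_right.mpr h]
  calc Q.comp v u ≤ ⨆ x ∈ ({v, v'} : Set (Q.Hom T U)), Q.comp x u :=
        le_iSup₂ (f := fun x (_ : x ∈ ({v, v'} : Set (Q.Hom T U))) => Q.comp x u) v (by simp)
  _ = Q.comp v' u := by rw [← Q.sSup_comp, h2]

theorem comp_le_comp_right {S T U : Obj} (v : Q.Hom T U) {u u' : Q.Hom S T} (h : u ≤ u') :
    Q.comp v u ≤ Q.comp v u' := by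
  have h2 : (sSup {u, u'} : Q.Hom S T) = u' := by rw [sSup_pair, sup_eq_right.mpr h]
  calc Q.comp v u ≤ ⨆ x ∈ ({u, u'} : Set (Q.Hom S T)), Q.comp v x :=
        le_iSup₂ (f := fun x (_ : x ∈ ({u, u'} : Set (Q.Hom S T))) => Q.comp v x) u (by simp)
  _ = Q.comp v u' := by rw [← Q.comp_sSup, h2]

theorem le_rext_iff {S T U : Obj} {w : Q.Hom S U} {u : Q.Hom S T} {v : Q.Hom T U} :
    v ≤ Q.rext w u ↔ Q.comp v u ≤ w := by
  constructor
  · intro h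
    refine le_trans (comp_le_comp_left h u) ?_
    rw [Quantaloid.rext, Q.sSup_comp]
    exact iSup₂_le fun x hx => hx
  · intro h; exact le_sSup h

theorem le_rlift_iff {S T U : Obj} {v : Q.Hom T U} {w : Q.Hom S U} {u' : Q.Hom S T} :
    u' ≤ Q.rlift v w ↔ Q.comp v u' ≤ w := by
  constructor
  · intro h
    refine le_trans (comp_le_comp_right v h) ?_
    rw [Quantaloid.rlift, Q.comp_sSup]
    exact iSup₂_le fun x hx => hx
  · intro h; exact le_sSup h

/-- The opposite quantaloid. -/
def op (Q : Quantaloid Obj) : Quantaloid Obj where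
  Hom S T := Q.Hom T S
  lat S T := Q.lat T S
  comp v u := Q.comp u v
  one := Q.one
  comp_assoc x y z := (Q.comp_assoc z y x).symm
  one_comp u := Q.comp_one u
  comp_one u := Q.one_comp u
  comp_sSup v s := Q.sSup_comp s v
  sSup_comp s u := Q.comp_sSup u s

end Quantaloid

/-- A (possibly large) `Q`-category. -/
structure QCat {Obj : Type u} (Q : Quantaloid.{u, v} Obj) : Type (max u v (w + 1)) where
  Ob : Type w
  ext : Ob → Obj
  hom : ∀ X Y : Ob, Q.Hom (ext X) (ext Y)
  id_le : ∀ X : Ob, Q.one (ext X) ≤ hom X X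
  comp_le : ∀ X Y Z : Ob, Q.comp (hom Y Z) (hom X Y) ≤ hom X Z

variable {Obj : Type u} {Q : Quantaloid.{u, v} Obj}

/-- The dual `Q^op`-category. -/
def QCat.op (E : QCat.{u, v, w} Q) : QCat.{u, v, w} Q.op where
  Ob := E.Ob
  ext := E.ext
  hom X Y := E.hom Y X
  id_le X := E.id_le X
  comp_le X Y Z := E.comp_le Z Y X

/-- A (contravariant) presheaf on a `Q`-category. -/
structure Presheaf (E : QCat.{u, v, w} Q) : Type (max u v w) where
  ext : Obj
  arr : ∀ X : E.Ob, Q.Hom (E.ext X) ext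
  compat : ∀ X X' : E.Ob, Q.comp (arr X) (E.hom X' X) ≤ arr X'

/-- A covariant presheaf on a `Q`-category. -/
structure Copresheaf (E : QCat.{u, v, w} Q) : Type (max u v w) where
  ext : Obj
  arr : ∀ X : E.Ob, Q.Hom ext (E.ext X)
  compat : ∀ X X' : E.Ob, Q.comp (E.hom X X') (arr X) ≤ arr X'

/-- Hom-arrows of the presheaf `Q`-category `PE`. -/
def PEhom {E : QCat.{u, v, w} Q} (φ ψ : Presheaf E) : Q.Hom φ.ext ψ.ext :=
  ⨅ X : E.Ob, Q.rext (ψ.arr X) (φ.arr X)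

/-- Hom-arrows of the covariant presheaf `Q`-category `P†E`. -/
def coPEhom {E : QCat.{u, v, w} Q} (ψ ψ' : Copresheaf E) : Q.Hom ψ.ext ψ'.ext :=
  ⨅ X : E.Ob, Q.rlift (ψ'.arr X) (ψ.arr X)

/-- The Yoneda embedding on objects: the representable presheaf. -/
def yonedaP (E : QCat.{u, v, w} Q) (Z : E.Ob) : Presheaf E where
  ext := E.ext Z
  arr X := E.hom X Z
  compat X X' := E.comp_le X' X Z

theorem PE_id_le {E : QCat.{u, v, w} Q} (φ : Presheaf E) : Q.one φ.ext ≤ PEhom φ φ :=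
  le_iInf fun X => Quantaloid.le_rext_iff.mpr (by rw [Q.one_comp])

theorem PE_comp_le {E : QCat.{u, v, w} Q} (φ ψ χ : Presheaf E) :
    Q.comp (PEhom ψ χ) (PEhom φ ψ) ≤ PEhom φ χ :=
  le_iInf fun X => Quantaloid.le_rext_iff.mpr (by
    rw [Q.comp_assoc]
    exact le_trans
      (Quantaloid.comp_le_comp_right (v := PEhom ψ χ) (u' := ψ.arr X)
        (Quantaloid.le_rext_iff.mp (iInf_le _ X)))
      (Quantaloid.le_rext_iff.mp (iInf_le _ X)))

/-- `Y` is a supremum of the presheaf `φ`. -/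
def IsSup (E : QCat.{u, v, w} Q) (φ : Presheaf E) (Y : E.Ob) : Prop :=
  ∃ h : φ.ext = E.ext Y, ∀ Z : E.Ob,
    Q.cast2 h.symm rfl (E.hom Y Z) = ⨅ X : E.Ob, Q.rext (E.hom X Z) (φ.arr X)

/-- Totality: every presheaf has a supremum. -/
def QTotal (E : QCat.{u, v, w} Q) : Prop := ∀ φ : Presheaf E, ∃ Y : E.Ob, IsSup E φ Y

/-- `Y` is a tensor `u ⋆ X`. -/
def IsTensor (E : QCat.{u, v, w} Q) (X : E.Ob) {T : Obj} (u : Q.Hom (E.ext X) T) (Y : E.Ob) : Prop :=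
  ∃ h : T = E.ext Y, ∀ Z : E.Ob,
    Q.cast2 h.symm rfl (E.hom Y Z) = Q.rext (E.hom X Z) u

def Tensored (E : QCat.{u, v, w} Q) : Prop :=
  ∀ (X : E.Ob) (T : Obj) (u : Q.Hom (E.ext X) T), ∃ Y : E.Ob, IsTensor E X u Y

/-- Conical cocompleteness: joins of representables have suprema. -/
def ConicallyCocomplete (E : QCat.{u, v, w} Q) : Prop :=
  ∀ (T : Obj) (ι : Type w) (Y : ι → E.Ob) (e : ∀ i, E.ext (Y i) = T)
    (ψ : Presheaf E) (hψ : ψ.ext = T),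
    (∀ X : E.Ob, ψ.arr X = Q.cast2 rfl hψ.symm (⨆ i, Q.cast2 rfl (e i) (E.hom X (Y i)))) →
    ∃ Y0 : E.Ob, IsSup E ψ Y0

/-- A `Q`-functor. -/
structure QFun (E : QCat.{u, v, w} Q) (D : QCat.{u, v, w₂} Q) : Type (max u w w₂) where
  obj : E.Ob → D.Ob
  ext_eq : ∀ X : E.Ob, E.ext X = D.ext (obj X)
  le_hom : ∀ X Y : E.Ob,
    E.hom X Y ≤ Q.cast2 (ext_eq X).symm (ext_eq Y).symm (D.hom (obj X) (obj Y))

def FullyFaithful {E : QCat.{u, v, w} Q} {D : QCat.{u, v, w₂} Q} (F : QFun E D) : Prop :=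
  ∀ X Y : E.Ob,
    Q.cast2 (F.ext_eq X).symm (F.ext_eq Y).symm (D.hom (F.obj X) (F.obj Y)) = E.hom X Y

/-- A `Q`-distributor. -/
structure QDist (E D : QCat.{u, v, w} Q) : Type (max u v w) where
  d : ∀ (X : E.Ob) (Y : D.Ob), Q.Hom (E.ext X) (D.ext Y)
  compat : ∀ (X X' : E.Ob) (Y Y' : D.Ob),
    Q.comp (D.hom Y Y') (Q.comp (d X Y) (E.hom X' X)) ≤ d X' Y'

/-- The identity distributor of a `Q`-category. -/
def homDist (E : QCat.{u, v, w} Q) : QDist E E where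
  d := E.hom
  compat X X' Y Y' :=
    le_trans (Quantaloid.comp_le_comp_right _ (E.comp_le X' X Y)) (E.comp_le X' Y Y')

/-- The Isbell closure `Φ↓Φ↑φ`, computed pointwise. -/
def isbell {E B : QCat.{u, v, w} Q} (Φ : QDist E B) (φ : Presheaf E) (X : E.Ob) :
    Q.Hom (E.ext X) φ.ext :=
  ⨅ Y : B.Ob, Q.rlift (⨅ X' : E.Ob, Q.rext (Φ.d X' Y) (φ.arr X')) (Φ.d X Y)

/-- The Isbell `Q`-category of a distributor: fixed points of `Φ↓Φ↑`. -/
def ICat {E B : QCat.{u, v, w} Q} (Φ : QDist E B) : QCat.{u, v, max u v w} Q where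
  Ob := {φ : Presheaf E // ∀ X : E.Ob, isbell Φ φ X = φ.arr X}
  ext φ := φ.1.ext
  hom φ ψ := PEhom φ.1 ψ.1
  id_le φ := PE_id_le φ.1
  comp_le φ ψ χ := PE_comp_le φ.1 ψ.1 χ.1

/-- The fibre of a `Q`-category over `T`. -/
def Fib (E : QCat.{u, v, w} Q) (T : Obj) := {X : E.Ob // E.ext X = T}

def fibLE {E : QCat.{u, v, w} Q} {T : Obj} (X Y : Fib E T) : Prop :=
  Q.one T ≤ Q.cast2 X.2 Y.2 (E.hom X.1 Y.1)

def IsFibJoin {E : QCat.{u, v, w} Q} {T : Obj} (s : Set (Fib E T)) (Y : Fib E T) : Prop :=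
  (∀ X ∈ s, fibLE X Y) ∧ ∀ Z : Fib E T, (∀ X ∈ s, fibLE X Z) → fibLE Y Z

def OrderComplete (E : QCat.{u, v, w} Q) : Prop :=
  ∀ (T : Obj) (s : Set (Fib E T)), ∃ Y : Fib E T, IsFibJoin s Y

/-- A right adjoint to a `Q`-functor. -/
structure RAdj {E D : QCat.{u, v, w} Q} (F : QFun E D) : Type (max u w) where
  G : D.Ob → E.Ob
  ext_eq : ∀ Y : D.Ob, D.ext Y = E.ext (G Y)
  functor : ∀ Y Y' : D.Ob,
    D.hom Y Y' ≤ Q.cast2 (ext_eq Y).symm (ext_eq Y').symm (E.hom (G Y) (G Y'))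
  adj : ∀ (X : E.Ob) (Y : D.Ob),
    Q.cast2 rfl (ext_eq Y).symm (E.hom X (G Y)) =
      Q.cast2 (F.ext_eq X).symm rfl (D.hom (F.obj X) Y)

/-- A left adjoint to a `Q`-functor. -/
structure LAdjTo {A C : QCat.{u, v, w} Q} (J : QFun A C) : Type (max u w) where
  L : C.Ob → A.Ob
  ext_eq : ∀ Y : C.Ob, C.ext Y = A.ext (L Y)
  functor : ∀ Y Y' : C.Ob,
    C.hom Y Y' ≤ Q.cast2 (ext_eq Y).symm (ext_eq Y').symm (A.hom (L Y) (L Y'))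
  adj : ∀ (Y : C.Ob) (X : A.Ob),
    Q.cast2 (ext_eq Y).symm rfl (A.hom (L Y) X) =
      Q.cast2 rfl (J.ext_eq X).symm (C.hom Y (J.obj X))

/-- A left adjoint to the Yoneda functor. -/
structure YonedaLAdj (E : QCat.{u, v, w} Q) : Type (max u v w) where
  L : Presheaf E → E.Ob
  ext_eq : ∀ φ : Presheaf E, φ.ext = E.ext (L φ)
  functor : ∀ φ ψ : Presheaf E,
    PEhom φ ψ ≤ Q.cast2 (ext_eq φ).symm (ext_eq ψ).symm (E.hom (L φ) (L ψ))
  adj : ∀ (φ : Presheaf E) (Z : E.Ob),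
    Q.cast2 (ext_eq φ).symm rfl (E.hom (L φ) Z) = PEhom φ (yonedaP E Z)

/-- A left adjoint to `E(X,−) : E → P{|X|}`. -/
structure TensorLAdj (E : QCat.{u, v, w} Q) (X : E.Ob) : Type (max u v w) where
  L : ∀ {T : Obj}, Q.Hom (E.ext X) T → E.Ob
  ext_eq : ∀ {T : Obj} (u : Q.Hom (E.ext X) T), T = E.ext (L u)
  functor : ∀ {T U : Obj} (u : Q.Hom (E.ext X) T) (v : Q.Hom (E.ext X) U),
    Q.rext v u ≤ Q.cast2 (ext_eq u).symm (ext_eq v).symm (E.hom (L u) (L v))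
  adj : ∀ {T : Obj} (u : Q.Hom (E.ext X) T) (Z : E.Ob),
    Q.cast2 (ext_eq u).symm rfl (E.hom (L u) Z) = Q.rext (E.hom X Z) u

/-- A `Q`-functor into the presheaf category `PE`. -/
structure QPFun (C E : QCat.{u, v, w} Q) : Type (max u v w) where
  obj : C.Ob → Presheaf E
  ext_eq : ∀ Z : C.Ob, C.ext Z = (obj Z).ext
  le_hom : ∀ Z Z' : C.Ob,
    C.hom Z Z' ≤ Q.cast2 (ext_eq Z).symm (ext_eq Z').symm (PEhom (obj Z) (obj Z'))

/-- Two objects of a `Q`-category are isomorphic. -/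
def ObIso (B : QCat.{u, v, w} Q) (Y Y' : B.Ob) : Prop :=
  ∃ h : B.ext Y = B.ext Y',
    (Q.one (B.ext Y) ≤ Q.cast2 rfl h.symm (B.hom Y Y')) ∧
    (Q.one (B.ext Y) ≤ Q.cast2 h.symm rfl (B.hom Y' Y))

/-- Equivalence of `Q`-categories. -/
def QEquiv (A : QCat.{u, v, w} Q) (B : QCat.{u, v, w₂} Q) : Prop :=
  ∃ F : QFun A B, FullyFaithful F ∧ ∀ Y : B.Ob, ∃ X : A.Ob, ObIso B (F.obj X) Y

/-- `Y` is the weighted colimit `φ ⋆ J`. -/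
def IsWeightedColim {E : QCat.{u, v, w} Q} {C : QCat.{u, v, w₂} Q} (J : QFun E C) (φ : Presheaf E) (Y : C.Ob) : Prop :=
  ∃ h : φ.ext = C.ext Y, ∀ Z : C.Ob,
    Q.cast2 h.symm rfl (C.hom Y Z) =
      ⨅ X : E.Ob, Q.rext (Q.cast2 (J.ext_eq X).symm rfl (C.hom (J.obj X) Z)) (φ.arr X)

/-- `Y` is the weighted limit `ψ ⤳ J`. -/
def IsWeightedLim {E : QCat.{u, v, w} Q} {C : QCat.{u, v, w₂} Q} (J : QFun E C) (ψ : Copresheaf E) (Y : C.Ob) : Prop :=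
  ∃ h : ψ.ext = C.ext Y, ∀ Z : C.Ob,
    Q.cast2 rfl h.symm (C.hom Z Y) =
      ⨅ X : E.Ob, Q.rlift (ψ.arr X) (Q.cast2 rfl (J.ext_eq X).symm (C.hom Z (J.obj X)))

/-- `HG ≅ F` for `Q`-functors. -/
def CompIso {C D E : QCat.{u, v, w} Q} (G : QFun C D) (H : QFun D E) (F : QFun C E) : Prop :=
  (∀ X : C.Ob, Q.one (C.ext X) ≤
    Q.cast2 ((G.ext_eq X).trans (H.ext_eq (G.obj X))).symm (F.ext_eq X).symm
      (E.hom (H.obj (G.obj X)) (F.obj X))) ∧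
  (∀ X : C.Ob, Q.one (C.ext X) ≤
    Q.cast2 (F.ext_eq X).symm ((G.ext_eq X).trans (H.ext_eq (G.obj X))).symm
      (E.hom (F.obj X) (H.obj (G.obj X))))

/-! If `E` is total, `F` extends along `G` by the left Kan extension
`H Y = sup (⋁_X D(GX, Y) ∘ E(−, FX))`. When `G` is fully faithful the weight at `Y = GX` is
`⋁_X' C(X', X) ∘ E(−, FX')`, which is isomorphic to the representable `E(−, FX)`, and the
supremum of a representable is its representing object; so `HG ≅ F`.

Conversely, given a presheaf `φ` on `E`, let `D` be the full subcategory of `PE` spanned by the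
representables and `φ`. By the Yoneda lemma `E` embeds fully faithfully into `D`, so the
identity of `E` extends to some `H : D → E` with `H X ≅ X`, and then
`E(Hφ, Z) = D(φ, Z) = PE(φ, E(−, Z))`: `Hφ` is a supremum of `φ`. -/

namespace Quantaloid

@[simp]
theorem cast2_rfl {S T : Obj} (u : Q.Hom S T) : Q.cast2 rfl rfl u = u := rfl

theorem cast2_cast2 {S S' S'' T T' T'' : Obj} (h₁ : S = S') (h₂ : S' = S'')
    (k₁ : T = T') (k₂ : T' = T'') (u : Q.Hom S T) :
    Q.cast2 h₂ k₂ (Q.cast2 h₁ k₁ u) = Q.cast2 (h₁.trans h₂) (k₁.trans k₂) u := by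
  subst h₁ h₂ k₁ k₂; rfl

theorem cast2_mono {S S' T T' : Obj} (hS : S = S') (hT : T = T') {u v : Q.Hom S T}
    (h : u ≤ v) : Q.cast2 hS hT u ≤ Q.cast2 hS hT v := by
  subst hS hT; exact h

theorem le_cast2_iff {S S' T T' : Obj} (hS : S = S') (hT : T = T') (u : Q.Hom S' T')
    (v : Q.Hom S T) : u ≤ Q.cast2 hS hT v ↔ Q.cast2 hS.symm hT.symm u ≤ v := by
  subst hS hT; rfl

theorem cast2_comp_cast2 {S T T' U : Obj} (h : T' = T) (v : Q.Hom T U) (u : Q.Hom S T) :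
    Q.comp (Q.cast2 h.symm rfl v) (Q.cast2 rfl h.symm u) = Q.comp v u := by
  subst h; rfl

theorem comp_cast2_rfl {S S' T U : Obj} (h : S = S') (v : Q.Hom T U) (u : Q.Hom S T) :
    Q.comp v (Q.cast2 h rfl u) = Q.cast2 h rfl (Q.comp v u) := by
  subst h; rfl

theorem cast2_rfl_comp {S T U U' : Obj} (h : U = U') (v : Q.Hom T U) (u : Q.Hom S T) :
    Q.comp (Q.cast2 rfl h v) u = Q.cast2 rfl h (Q.comp v u) := by
  subst h; rfl

theorem comp_cast2_one {R S T : Obj} (h : S = T) (u : Q.Hom R T) :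
    Q.comp (Q.cast2 h rfl (Q.one S)) u = Q.cast2 rfl h.symm u := by
  subst h; exact Q.one_comp u

theorem comp_le_comp {S T U : Obj} {v v' : Q.Hom T U} {u u' : Q.Hom S T} (hv : v ≤ v')
    (hu : u ≤ u') : Q.comp v u ≤ Q.comp v' u' :=
  (comp_le_comp_left hv u).trans (comp_le_comp_right v' hu)

theorem comp_iSup {ι : Sort*} {S T U : Obj} (v : Q.Hom T U) (f : ι → Q.Hom S T) :
    Q.comp v (⨆ i, f i) = ⨆ i, Q.comp v (f i) := by
  rw [iSup, Q.comp_sSup, iSup_range]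

theorem iSup_comp {ι : Sort*} {S T U : Obj} (f : ι → Q.Hom T U) (u : Q.Hom S T) :
    Q.comp (⨆ i, f i) u = ⨆ i, Q.comp (f i) u := by
  rw [iSup, Q.sSup_comp, iSup_range]

end Quantaloid

open Quantaloid

namespace QCat

variable (E : QCat.{u, v, w} Q)

theorem one_le_cast2_hom {S : Obj} {Y : E.Ob} (h : S = E.ext Y) :
    Q.one S ≤ Q.cast2 h.symm h.symm (E.hom Y Y) := by
  subst h; exact E.id_le Y

theorem cast2_hom_le_of_one_le_left {A A' : E.Ob} (h : E.ext A = E.ext A')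
    (hA : Q.one (E.ext A) ≤ Q.cast2 rfl h.symm (E.hom A A')) (B : E.Ob) :
    Q.cast2 h.symm rfl (E.hom A' B) ≤ E.hom A B :=
  calc Q.cast2 h.symm rfl (E.hom A' B)
      = Q.comp (Q.cast2 h.symm rfl (E.hom A' B)) (Q.one (E.ext A)) := (Q.comp_one _).symm
    _ ≤ Q.comp (Q.cast2 h.symm rfl (E.hom A' B)) (Q.cast2 rfl h.symm (E.hom A A')) :=
      comp_le_comp_right _ hA
    _ = Q.comp (E.hom A' B) (E.hom A A') := cast2_comp_cast2 h _ _
    _ ≤ E.hom A B := E.comp_le A A' B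

theorem cast2_hom_le_of_one_le_right {B B' : E.Ob} (h : E.ext B = E.ext B')
    (hB : Q.one (E.ext B) ≤ Q.cast2 h.symm rfl (E.hom B' B)) (A : E.Ob) :
    Q.cast2 rfl h.symm (E.hom A B') ≤ E.hom A B :=
  calc Q.cast2 rfl h.symm (E.hom A B')
      = Q.comp (Q.one (E.ext B)) (Q.cast2 rfl h.symm (E.hom A B')) := (Q.one_comp _).symm
    _ ≤ Q.comp (Q.cast2 h.symm rfl (E.hom B' B)) (Q.cast2 rfl h.symm (E.hom A B')) :=
      comp_le_comp_left hB _
    _ = Q.comp (E.hom B' B) (E.hom A B') := cast2_comp_cast2 h _ _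
    _ ≤ E.hom A B := E.comp_le A B' B

end QCat

section Presheaves

variable {E : QCat.{u, v, w} Q}

theorem le_PEhom_iff {φ ψ : Presheaf E} {u : Q.Hom φ.ext ψ.ext} :
    u ≤ PEhom φ ψ ↔ ∀ X, Q.comp u (φ.arr X) ≤ ψ.arr X := by
  simp only [PEhom, le_iInf_iff, le_rext_iff]

theorem PEhom_comp_arr_le (φ ψ : Presheaf E) (X : E.Ob) :
    Q.comp (PEhom φ ψ) (φ.arr X) ≤ ψ.arr X :=
  le_PEhom_iff.1 le_rfl X

theorem PEhom_yonedaP (φ : Presheaf E) (X : E.Ob) : PEhom (yonedaP E X) φ = φ.arr X := by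
  refine le_antisymm ?_ (le_PEhom_iff.2 fun W => φ.compat X W)
  exact ((Q.comp_one _).symm.trans_le (comp_le_comp_right _ (E.id_le X))).trans
    (PEhom_comp_arr_le _ φ X)

end Presheaves

namespace IsSup

variable {E : QCat.{u, v, w} Q} {φ ψ : Presheaf E} {Y Y' : E.Ob}

theorem ext_eq (hY : IsSup E φ Y) : φ.ext = E.ext Y := hY.fst

theorem cast2_hom_eq (hY : IsSup E φ Y) (Z : E.Ob) :
    Q.cast2 hY.ext_eq.symm rfl (E.hom Y Z) = PEhom φ (yonedaP E Z) := hY.snd Z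

theorem le_cast2_hom_iff (hY : IsSup E φ Y) {S T : Obj} {Z : E.Ob} (hS : S = φ.ext)
    (hZ : T = E.ext Z) {u : Q.Hom S T} :
    u ≤ Q.cast2 (hS.trans hY.ext_eq).symm hZ.symm (E.hom Y Z) ↔
      ∀ X, Q.comp (Q.cast2 hS rfl u) (φ.arr X) ≤ Q.cast2 rfl hZ.symm (E.hom X Z) := by
  subst hS hZ
  rw [hY.cast2_hom_eq]
  exact le_PEhom_iff (φ := φ) (ψ := yonedaP E Z) (u := u)

theorem arr_le (hY : IsSup E φ Y) (W : E.Ob) :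
    φ.arr W ≤ Q.cast2 rfl hY.ext_eq.symm (E.hom W Y) := by
  have h := (hY.le_cast2_hom_iff rfl hY.ext_eq).1 (E.one_le_cast2_hom hY.ext_eq) W
  rwa [cast2_rfl, Q.one_comp] at h

theorem PEhom_le (hY : IsSup E φ Y) (hY' : IsSup E ψ Y') :
    PEhom φ ψ ≤ Q.cast2 hY.ext_eq.symm hY'.ext_eq.symm (E.hom Y Y') :=
  (hY.le_cast2_hom_iff rfl hY'.ext_eq).2 fun X =>
    (PEhom_comp_arr_le φ ψ X).trans (hY'.arr_le X)

end IsSup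

section Total

variable {C D E : QCat.{u, v, w} Q}

noncomputable def QPFun.compSup (hE : QTotal E) (Φ : QPFun C E) : QFun C E where
  obj Z := (hE (Φ.obj Z)).choose
  ext_eq Z := (Φ.ext_eq Z).trans (hE (Φ.obj Z)).choose_spec.ext_eq
  le_hom Z Z' := calc
    C.hom Z Z' ≤ _ := Φ.le_hom Z Z'
    _ ≤ _ := cast2_mono _ _ ((hE _).choose_spec.PEhom_le (hE _).choose_spec)
    _ = _ := cast2_cast2 _ _ _ _ _

/-- The weight `F_!(G_♮(−, Y))`; its supremum is the left Kan extension of `F` along `G`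
at `Y`. -/
def kanPresheaf (F : QFun C E) (G : QFun C D) (Y : D.Ob) : Presheaf E where
  ext := D.ext Y
  arr Z := ⨆ X, Q.comp (Q.cast2 ((G.ext_eq X).symm.trans (F.ext_eq X)) rfl (D.hom (G.obj X) Y))
    (E.hom Z (F.obj X))
  compat Z Z' := by
    rw [iSup_comp]
    refine iSup_mono fun X => ?_
    rw [Q.comp_assoc]
    exact comp_le_comp_right _ (E.comp_le Z' Z (F.obj X))

theorem hom_le_PEhom_kanPresheaf (F : QFun C E) (G : QFun C D) (Y Y' : D.Ob) :
    D.hom Y Y' ≤ PEhom (kanPresheaf F G Y) (kanPresheaf F G Y') :=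
  (le_PEhom_iff (φ := kanPresheaf F G Y) (ψ := kanPresheaf F G Y')).2 fun Z => by
    dsimp only [kanPresheaf]
    rw [comp_iSup]
    refine iSup_mono fun X => ?_
    rw [← Q.comp_assoc, comp_cast2_rfl]
    exact comp_le_comp_left (cast2_mono _ _ (D.comp_le _ _ _)) _

def kanQPFun (F : QFun C E) (G : QFun C D) : QPFun D E :=
  ⟨kanPresheaf F G, fun _ => rfl, hom_le_PEhom_kanPresheaf F G⟩

theorem FullyFaithful.cast2_hom_le {G : QFun C D} (hG : FullyFaithful G) (F : QFun C E)
    (X' X : C.Ob) :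
    Q.cast2 ((G.ext_eq X').symm.trans (F.ext_eq X')) rfl (D.hom (G.obj X') (G.obj X)) ≤
      Q.cast2 rfl ((F.ext_eq X).symm.trans (G.ext_eq X)) (E.hom (F.obj X') (F.obj X)) :=
  calc _ = Q.cast2 (F.ext_eq X') (G.ext_eq X) (C.hom X' X) := by rw [← hG X' X, cast2_cast2]
    _ ≤ _ := cast2_mono _ _ (F.le_hom X' X)
    _ = _ := cast2_cast2 _ _ _ _ _

theorem kanPresheaf_arr_le {G : QFun C D} (hG : FullyFaithful G) (F : QFun C E) (X : C.Ob)
    (W : E.Ob) :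
    (kanPresheaf F G (G.obj X)).arr W ≤
      Q.cast2 rfl ((F.ext_eq X).symm.trans (G.ext_eq X)) (E.hom W (F.obj X)) :=
  iSup_le fun X' => calc
    _ ≤ Q.comp (Q.cast2 rfl ((F.ext_eq X).symm.trans (G.ext_eq X)) (E.hom (F.obj X') (F.obj X)))
          (E.hom W (F.obj X')) := comp_le_comp_left (hG.cast2_hom_le F X' X) _
    _ = _ := cast2_rfl_comp _ _ _
    _ ≤ _ := cast2_mono _ _ (E.comp_le _ _ _)

theorem cast2_one_le_kanPresheaf_arr (F : QFun C E) (G : QFun C D) (X : C.Ob) :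
    Q.cast2 (F.ext_eq X) (G.ext_eq X) (Q.one (C.ext X)) ≤
      (kanPresheaf F G (G.obj X)).arr (F.obj X) := by
  have hone := cast2_mono (F.ext_eq X) (G.ext_eq X) (D.one_le_cast2_hom (G.ext_eq X))
  rw [cast2_cast2] at hone
  refine le_iSup_of_le X ?_
  calc _ = Q.comp (Q.cast2 (F.ext_eq X) (G.ext_eq X) (Q.one (C.ext X))) (Q.one _) :=
        (Q.comp_one _).symm
    _ ≤ _ := comp_le_comp hone (E.id_le _)

theorem QTotal.exists_compIso (hE : QTotal E) (F : QFun C E) {G : QFun C D}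
    (hG : FullyFaithful G) : ∃ H : QFun D E, CompIso G H F := by
  refine ⟨(kanQPFun F G).compSup hE, fun X => ?_, fun X => ?_⟩ <;>
    have hs := (hE (kanPresheaf F G (G.obj X))).choose_spec
  · refine (hs.le_cast2_hom_iff (G.ext_eq X) (F.ext_eq X)).2 fun W => ?_
    calc _ ≤ Q.comp (Q.cast2 (G.ext_eq X) rfl (Q.one _))
          (Q.cast2 rfl ((F.ext_eq X).symm.trans (G.ext_eq X)) (E.hom W (F.obj X))) :=
        comp_le_comp_right _ (kanPresheaf_arr_le hG F X W)
      _ = _ := by rw [comp_cast2_one, cast2_cast2]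
  · refine (le_cast2_iff _ _ _ _).2 ?_
    calc Q.cast2 (F.ext_eq X) ((G.ext_eq X).trans hs.ext_eq) (Q.one _)
        = Q.cast2 rfl hs.ext_eq (Q.cast2 (F.ext_eq X) (G.ext_eq X) (Q.one _)) :=
          (cast2_cast2 _ _ _ _ _).symm
      _ ≤ Q.cast2 rfl hs.ext_eq ((kanPresheaf F G (G.obj X)).arr (F.obj X)) :=
          cast2_mono _ _ (cast2_one_le_kanPresheaf_arr F G X)
      _ ≤ _ := (le_cast2_iff _ _ _ _).1 (hs.arr_le _)

end Total

section Injective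

def QCat.ofPresheaves (E : QCat.{u, v, w₂} Q) {ι : Type w} (P : ι → Presheaf E) :
    QCat.{u, v, w} Q where
  Ob := ι
  ext i := (P i).ext
  hom i j := PEhom (P i) (P j)
  id_le i := PE_id_le (P i)
  comp_le i j k := PE_comp_le (P i) (P j) (P k)

def QFun.id (E : QCat.{u, v, w} Q) : QFun E E := ⟨_root_.id, fun _ => rfl, fun _ _ => le_rfl⟩

variable {E : QCat.{u, v, w} Q}

namespace CompIso

variable {D : QCat.{u, v, w} Q} {G : QFun E D} {H : QFun D E}

theorem hom_le_hom_map_left (hGH : CompIso G H (QFun.id E)) (X : E.Ob) (d : D.Ob) :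
    D.hom (G.obj X) d ≤ Q.cast2 (G.ext_eq X) (H.ext_eq d).symm (E.hom X (H.obj d)) :=
  calc D.hom (G.obj X) d
      ≤ Q.cast2 (H.ext_eq (G.obj X)).symm (H.ext_eq d).symm
          (E.hom (H.obj (G.obj X)) (H.obj d)) := H.le_hom _ _
    _ = Q.cast2 (G.ext_eq X) (H.ext_eq d).symm (Q.cast2 ((G.ext_eq X).trans
          (H.ext_eq (G.obj X))).symm rfl (E.hom (H.obj (G.obj X)) (H.obj d))) :=
        (cast2_cast2 _ _ _ _ _).symm
    _ ≤ _ := cast2_mono _ _ <|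
        E.cast2_hom_le_of_one_le_left ((G.ext_eq X).trans (H.ext_eq (G.obj X))) (hGH.2 X) _

theorem hom_le_hom_map_right (hGH : CompIso G H (QFun.id E)) (d : D.Ob) (Z : E.Ob) :
    D.hom d (G.obj Z) ≤ Q.cast2 (H.ext_eq d).symm (G.ext_eq Z) (E.hom (H.obj d) Z) :=
  calc D.hom d (G.obj Z)
      ≤ Q.cast2 (H.ext_eq d).symm (H.ext_eq (G.obj Z)).symm
          (E.hom (H.obj d) (H.obj (G.obj Z))) := H.le_hom _ _
    _ = Q.cast2 (H.ext_eq d).symm (G.ext_eq Z) (Q.cast2 rfl ((G.ext_eq Z).trans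
          (H.ext_eq (G.obj Z))).symm (E.hom (H.obj d) (H.obj (G.obj Z)))) :=
        (cast2_cast2 _ _ _ _ _).symm
    _ ≤ _ := cast2_mono _ _ <|
        E.cast2_hom_le_of_one_le_right ((G.ext_eq Z).trans (H.ext_eq (G.obj Z))) (hGH.1 Z) _

end CompIso

theorem qTotal_of_exists_compIso
    (hE : ∀ (C D : QCat.{u, v, w} Q) (F : QFun C E) (G : QFun C D),
      FullyFaithful G → ∃ H : QFun D E, CompIso G H F) : QTotal E := by
  intro φ
  let D := QCat.ofPresheaves E (Option.elim' φ (yonedaP E))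
  let G : QFun E D := ⟨some, fun _ => rfl, fun X Y => (PEhom_yonedaP (yonedaP E Y) X).ge⟩
  obtain ⟨H, hGH⟩ := hE E D (QFun.id E) G fun X Y => PEhom_yonedaP _ X
  refine ⟨H.obj none, H.ext_eq none, fun Z => le_antisymm ?_ (hGH.hom_le_hom_map_right none Z)⟩
  refine (le_PEhom_iff (ψ := yonedaP E Z)).2 fun X => ?_
  have hφX : φ.arr X ≤ Q.cast2 rfl (H.ext_eq none).symm (E.hom X (H.obj none)) :=
    (PEhom_yonedaP φ X).symm.trans_le (hGH.hom_le_hom_map_left X none)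
  exact (comp_le_comp_right _ hφX).trans
    ((cast2_comp_cast2 (H.ext_eq none) _ _).trans_le (E.comp_le X (H.obj none) Z))

end Injective

theorem stmt17 {Obj : Type u} {Q : Quantaloid.{u, v} Obj} (E : QCat.{u, v, w} Q) :
    QTotal E ↔
      ∀ (C D : QCat.{u, v, w} Q) (F : QFun C E) (G : QFun C D),
        FullyFaithful G → ∃ H : QFun D E, CompIso G H F :=
  ⟨fun hE _ _ F _ hG => hE.exists_compIso F hG, qTotal_of_exists_compIso⟩
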